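/- Let M ≥ 6 be even, let u = 0 < v < w < M with v and w even, and suppose b_u ⊕ b_v ⊕ b_w = 0. Define the intervals L = {1, ..., v−1}, R = {v+1, ..., w−1}, B = {w+1, ..., M−1}. Then for every z ∈ F_2^M with Γ(z) ≠ 0 one has i^{b_u + b_v + b_w} · (−1)^{E(z)} = 1, where E(z) = z_u + z_v + z_w + Σ_{j even, j ∉ {u,v,w}} z_j + b_u · Σ_{j ∈ R, j odd} z_j + b_v · Σ_{j ∈ B, j odd} z_j + b_w · Σ_{j ∈ L, j odd} z_j, with the exponent of −1 evaluated modulo 2 and the exponent of i being the integer b_u + b_v + b_w. -/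

import Mathlib

open Finset

/-- The quadratic form on F_2^M associated with the cycle on vertices
{0, ..., M−1} with bits b_u, b_v, b_w at the distinguished vertices
u = 0, v, w: q(x) = 2·Σ_j x_j x_{j+1} + b_u x_u + b_v x_v + b_w x_w in Z_4. -/
def cycleForm (M : ℕ) [NeZero M] (v w : Fin M) (bu bv bw : ZMod 2)
    (x : Fin M → ZMod 2) : ZMod 4 :=
  2 * ∑ j : Fin M, ((x j).val : ZMod 4) * ((x (j + 1)).val : ZMod 4)
    + (bu.val : ZMod 4) * ((x 0).val : ZMod 4)
    + (bv.val : ZMod 4) * ((x v).val : ZMod 4)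
    + (bw.val : ZMod 4) * ((x w).val : ZMod 4)

/-- The Fourier coefficient Γ(z) = Σ_x (−1)^{z^T x} i^{q(x)}. -/
noncomputable def cycleGamma (M : ℕ) [NeZero M] (v w : Fin M)
    (bu bv bw : ZMod 2) (z : Fin M → ZMod 2) : ℂ :=
  ∑ x : Fin M → ZMod 2,
    (-1 : ℂ) ^ (∑ α : Fin M, z α * x α).val *
      Complex.I ^ (cycleForm M v w bu bv bw x).val

/-- The exponent E(z) ∈ F_2: E(z) = z_u + z_v + z_w + Σ_{j even, j∉{u,v,w}} z_j
+ b_u·Σ_{j∈R, j odd} z_j + b_v·Σ_{j∈B, j odd} z_j + b_w·Σ_{j∈L, j odd} z_j,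
where L = {1,...,v−1}, R = {v+1,...,w−1}, B = {w+1,...,M−1} and u = 0. -/
def Eexp (M : ℕ) [NeZero M] (v w : Fin M) (bu bv bw : ZMod 2)
    (z : Fin M → ZMod 2) : ZMod 2 :=
  z 0 + z v + z w
    + ∑ j ∈ Finset.univ.filter
        (fun j : Fin M => Even j.val ∧ j ≠ 0 ∧ j ≠ v ∧ j ≠ w), z j
    + bu * ∑ j ∈ Finset.univ.filter
        (fun j : Fin M => v.val < j.val ∧ j.val < w.val ∧ Odd j.val), z j
    + bv * ∑ j ∈ Finset.univ.filter
        (fun j : Fin M => w.val < j.val ∧ Odd j.val), z j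
    + bw * ∑ j ∈ Finset.univ.filter
        (fun j : Fin M => 0 < j.val ∧ j.val < v.val ∧ Odd j.val), z j

/-! The vector `c` that is `1` on the even vertices and, on each odd vertex, carries the bit of
the distinguished vertex not bounding its arc lies in the radical of `q`: since
`b_u + b_v + b_w = 0`, `q (x + c) = q x + q c` for all `x`. Substituting `x ↦ x + c` in the sum
defining `Γ(z)` gives `Γ(z) = (-1)^{z·c} i^{q(c)} Γ(z)`, so `(-1)^{z·c} i^{q(c)} = 1` whenever
`Γ(z) ≠ 0`. Finally `z·c = E(z)`, and `q(c) = b_u + b_v + b_w` because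
`Σ_j c_j c_{j+1} = Σ_j (c_j + c_{j+1} + 1) = 2 Σ_j c_j + M = 0` mod 2: as `M` is even, one of
`j`, `j + 1` is even, where `c` is `1`. -/

theorem pow_val_add_of_pow_eq_one {G : Type*} [Monoid G] {n : ℕ} [NeZero n] {g : G}
    (hg : g ^ n = 1) (a b : ZMod n) : g ^ (a + b).val = g ^ a.val * g ^ b.val := by
  rw [ZMod.val_add, ← pow_add, ← pow_eq_pow_mod _ hg]

theorem eq_one_of_sum_comp_add_right_eq_mul {G R : Type*} [AddGroup G] [Fintype G]
    [CommRing R] [NoZeroDivisors R] (f : G → R) (c : G) (t : R)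
    (hf : ∀ x, f (x + c) = t * f x) (hsum : ∑ x, f x ≠ 0) : t = 1 := by
  refine (mul_eq_right₀ hsum).mp ?_
  calc t * ∑ x, f x = ∑ x, f (x + c) := by simp only [mul_sum, hf]
    _ = ∑ x, f x := Equiv.sum_comp (Equiv.addRight c) f

def twoLift : ZMod 2 →+ ZMod 4 where
  toFun a := 2 * (a.val : ZMod 4)
  map_zero' := rfl
  map_add' := by decide

theorem natCast_val_add (a b : ZMod 2) :
    ((a + b).val : ZMod 4) = a.val + b.val + twoLift (a * b) := by
  revert a b; decide

theorem natCast_val_mul_twoLift (a b : ZMod 2) :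
    (a.val : ZMod 4) * twoLift b = twoLift (a * b) := by
  revert a b; decide

theorem two_mul_natCast_val_mul (a b : ZMod 2) :
    2 * ((a.val : ZMod 4) * (b.val : ZMod 4)) = twoLift (a * b) := by
  revert a b; decide

section CycleForm

variable {M : ℕ} [NeZero M] (v w : Fin M) (bu bv bw : ZMod 2)

def cyclePolar (x y : Fin M → ZMod 2) : ZMod 2 :=
  ∑ j, (x j * y (j + 1) + y j * x (j + 1)) + bu * x 0 * y 0 + bv * x v * y v + bw * x w * y w

theorem cycleForm_eq_twoLift (x : Fin M → ZMod 2) :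
    cycleForm M v w bu bv bw x = twoLift (∑ j, x j * x (j + 1))
      + bu.val * (x 0).val + bv.val * (x v).val + bw.val * (x w).val := by
  simp only [cycleForm, mul_sum, two_mul_natCast_val_mul, map_sum]

theorem cycleForm_add (x y : Fin M → ZMod 2) :
    cycleForm M v w bu bv bw (x + y) = cycleForm M v w bu bv bw x + cycleForm M v w bu bv bw y
      + twoLift (cyclePolar v w bu bv bw x y) := by
  have hcycle : ∑ j, (x + y) j * (x + y) (j + 1) = ∑ j, x j * x (j + 1) + ∑ j, y j * y (j + 1)
      + ∑ j, (x j * y (j + 1) + y j * x (j + 1)) := by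
    simp only [Pi.add_apply, ← sum_add_distrib]
    exact sum_congr rfl fun j _ => by ring
  rw [cycleForm_eq_twoLift, hcycle]
  simp only [cycleForm_eq_twoLift, cyclePolar, Pi.add_apply, natCast_val_add, mul_add,
    natCast_val_mul_twoLift, map_add, mul_assoc]
  ring

theorem cyclePolar_eq (x y : Fin M → ZMod 2) :
    cyclePolar v w bu bv bw x y = ∑ j, x j * (y (j - 1) + y (j + 1))
      + bu * x 0 * y 0 + bv * x v * y v + bw * x w * y w := by
  have hshift : ∑ j, y j * x (j + 1) = ∑ j, x j * y (j - 1) := by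
    rw [← (Equiv.subRight (1 : Fin M)).sum_comp]
    simp [mul_comm]
  rw [cyclePolar, sum_add_distrib, hshift, ← sum_add_distrib]
  simp only [mul_add, add_comm]

end CycleForm

theorem Fin.even_val_add_one_iff {M : ℕ} [NeZero M] (hM : Even M) (j : Fin M) :
    Even (j + 1).val ↔ ¬Even j.val := by
  have hM2 : M % 2 = 0 := Nat.even_iff.mp hM
  have hM0 : M ≠ 0 := NeZero.ne M
  rw [Fin.val_add, Fin.val_one', Nat.mod_eq_of_lt (a := 1) (by omega), Nat.even_iff,
    Nat.mod_mod_of_dvd _ (even_iff_two_dvd.mp hM), Nat.not_even_iff_odd, Nat.odd_iff]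
  omega

theorem sum_mul_succ_eq_zero_of_even {M : ℕ} [NeZero M] (hM : Even M) (c : Fin M → ZMod 2)
    (hc : ∀ j, Even j.val → c j = 1) : ∑ j, c j * c (j + 1) = 0 := by
  have hterm : ∀ j, c j * c (j + 1) = c j + c (j + 1) + 1 := by
    intro j
    have key : ∀ a b : ZMod 2, a = 1 ∨ b = 1 → a * b = a + b + 1 := by decide
    refine key _ _ ?_
    by_cases hj : Even j.val
    · exact .inl (hc j hj)
    · exact .inr (hc _ ((Fin.even_val_add_one_iff hM j).mpr hj))
  have hrot : ∑ j, c (j + 1) = ∑ j, c j := Equiv.sum_comp (Equiv.addRight 1) c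
  calc ∑ j, c j * c (j + 1) = ∑ j, c j + ∑ j, c j + M := by
        simp only [hterm, sum_add_distrib, hrot, sum_const, card_univ, Fintype.card_fin,
          nsmul_eq_mul, mul_one]
    _ = 0 := by rw [CharTwo.add_self_eq_zero, zero_add, ZMod.natCast_eq_zero_iff_even]; exact hM

section RadicalVector

variable {M : ℕ} (v w : Fin M) (bu bv bw : ZMod 2)

def radicalVector (j : Fin M) : ZMod 2 :=
  if Even j.val then 1 else if j.val < v.val then bw else if j.val < w.val then bu else bv

theorem radicalVector_of_even {j : Fin M} (hj : Even j.val) : radicalVector v w bu bv bw j = 1 :=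
  if_pos hj

variable [NeZero M] (hv0 : 0 < v.val) (hvw : v.val < w.val) (hve : Even v.val)
  (hwe : Even w.val)
include hv0 hvw hve hwe

/- At an odd `j` both neighbours are even. At an even `j ∉ {0, v, w}` both neighbours are odd and
in the same arc. At `0`, `v`, `w` they lie in the two adjacent arcs, carrying the other two bits,
whose sum is the bit of the vertex because `bu + bv + bw = 0`. -/
theorem radicalVector_pred_add_succ (hM : Even M) (hb : bu + bv + bw = 0) (j : Fin M) :
    radicalVector v w bu bv bw (j - 1) + radicalVector v w bu bv bw (j + 1)
      = (Pi.single 0 bu + Pi.single v bv + Pi.single w bw : Fin M → ZMod 2) j := by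
  have hM2 : M % 2 = 0 := Nat.even_iff.mp hM
  have hM0 : M ≠ 0 := NeZero.ne M
  have h1 : (1 : Fin M).val = 1 := by rw [Fin.val_one']; exact Nat.mod_eq_of_lt (by omega)
  have hpred : (j - 1).val = if j.val = 0 then M - 1 else j.val - 1 := by
    rw [Fin.val_sub, h1]
    split_ifs with hj
    · rw [hj]; exact Nat.mod_eq_of_lt (by omega)
    · rw [show M - 1 + j.val = j.val - 1 + M by omega, Nat.add_mod_right]
      exact Nat.mod_eq_of_lt (by omega)
  have hsucc : (j + 1).val = if j.val + 1 = M then 0 else j.val + 1 := by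
    rw [Fin.val_add, h1]
    split_ifs with hj
    · rw [hj, Nat.mod_self]
    · exact Nat.mod_eq_of_lt (by omega)
  rw [Nat.even_iff] at hve hwe
  simp only [radicalVector, hpred, hsucc, Pi.add_apply, Pi.single_apply, Fin.ext_iff,
    Fin.val_zero, Nat.even_iff]
  split_ifs <;> first | omega | grind

theorem cyclePolar_radicalVector (hM : Even M) (hb : bu + bv + bw = 0) (x : Fin M → ZMod 2) :
    cyclePolar v w bu bv bw x (radicalVector v w bu bv bw) = 0 := by
  have hc : ∀ j : Fin M, Even j.val → radicalVector v w bu bv bw j = 1 :=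
    fun _ => radicalVector_of_even v w bu bv bw
  have hneighbours : ∑ j, x j * (radicalVector v w bu bv bw (j - 1)
      + radicalVector v w bu bv bw (j + 1)) = x 0 * bu + x v * bv + x w * bw :=
    calc _ = x ⬝ᵥ (Pi.single 0 bu + Pi.single v bv + Pi.single w bw) :=
          sum_congr rfl fun j _ => by
            rw [radicalVector_pred_add_succ v w bu bv bw hv0 hvw hve hwe hM hb]
      _ = _ := by simp only [dotProduct_add, dotProduct_single]
  rw [cyclePolar_eq, hneighbours, hc 0 (by simp), hc v hve, hc w hwe]
  grind

theorem radicalVector_eq_indicators (j : Fin M) :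
    radicalVector v w bu bv bw j = (if j = 0 then 1 else 0) + (if j = v then 1 else 0)
      + (if j = w then 1 else 0) + (if Even j.val ∧ j ≠ 0 ∧ j ≠ v ∧ j ≠ w then 1 else 0)
      + bu * (if v.val < j.val ∧ j.val < w.val ∧ Odd j.val then 1 else 0)
      + bv * (if w.val < j.val ∧ Odd j.val then 1 else 0)
      + bw * (if 0 < j.val ∧ j.val < v.val ∧ Odd j.val then 1 else 0) := by
  rw [Nat.even_iff] at hve hwe
  simp only [radicalVector, Fin.ext_iff, Fin.val_zero, Nat.even_iff, Nat.odd_iff, ne_eq]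
  split_ifs <;> first | omega | simp

theorem dotProduct_radicalVector (z : Fin M → ZMod 2) :
    z ⬝ᵥ radicalVector v w bu bv bw = Eexp M v w bu bv bw z := by
  simp only [dotProduct, radicalVector_eq_indicators v w bu bv bw hv0 hvw hve hwe, mul_add,
    mul_ite, mul_one, mul_zero, sum_add_distrib, sum_ite_eq', mem_univ, if_true, ← sum_filter,
    ← sum_mul, Eexp]
  ring

omit hv0 hvw in
theorem val_cycleForm_radicalVector (hM : Even M) :
    (cycleForm M v w bu bv bw (radicalVector v w bu bv bw)).val = bu.val + bv.val + bw.val := by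
  have hc : ∀ j : Fin M, Even j.val → radicalVector v w bu bv bw j = 1 :=
    fun _ => radicalVector_of_even v w bu bv bw
  rw [cycleForm_eq_twoLift, sum_mul_succ_eq_zero_of_even hM _ hc, hc 0 (by simp), hc v hve,
    hc w hwe, map_zero, ZMod.val_one, Nat.cast_one, zero_add, mul_one, mul_one, mul_one]
  have hlt : bu.val + bv.val + bw.val < 4 := by
    have := ZMod.val_lt bu; have := ZMod.val_lt bv; have := ZMod.val_lt bw; omega
  exact_mod_cast ZMod.val_natCast_of_lt hlt

end RadicalVector

theorem ghz_type_identity_of_Gamma_ne_zero_general (M : ℕ) [NeZero M]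
    (hMeven : Even M) (v w : Fin M)
    (hv0 : 0 < v.val) (hvw : v.val < w.val)
    (hve : Even v.val) (hwe : Even w.val)
    (bu bv bw : ZMod 2) (hb : bu + bv + bw = 0)
    (z : Fin M → ZMod 2) (hz : cycleGamma M v w bu bv bw z ≠ 0) :
    Complex.I ^ (bu.val + bv.val + bw.val) *
      (-1 : ℂ) ^ (Eexp M v w bu bv bw z).val = 1 := by
  set c := radicalVector v w bu bv bw
  have hshift : ∀ x, cycleForm M v w bu bv bw (x + c)
      = cycleForm M v w bu bv bw x + cycleForm M v w bu bv bw c := fun x => by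
    rw [cycleForm_add, cyclePolar_radicalVector v w bu bv bw hv0 hvw hve hwe hMeven hb,
      map_zero, add_zero]
  rw [← val_cycleForm_radicalVector v w bu bv bw hve hwe hMeven,
    ← dotProduct_radicalVector v w bu bv bw hv0 hvw hve hwe, mul_comm]
  refine eq_one_of_sum_comp_add_right_eq_mul
    (fun x => (-1 : ℂ) ^ (z ⬝ᵥ x).val * Complex.I ^ (cycleForm M v w bu bv bw x).val) c _
    (fun x => ?_) hz
  rw [dotProduct_add, hshift, pow_val_add_of_pow_eq_one (by norm_num),
    pow_val_add_of_pow_eq_one Complex.I_pow_four]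
  ring

/-- Let M ≥ 6 be even, u = 0 < v < w < M with v, w even, and
b_u ⊕ b_v ⊕ b_w = 0. Then for every z with Γ(z) ≠ 0 one has
i^{b_u+b_v+b_w}·(−1)^{E(z)} = 1. -/
theorem ghz_type_identity_of_Gamma_ne_zero (M : ℕ) [NeZero M]
    (hM6 : 6 ≤ M) (hMeven : Even M) (v w : Fin M)
    (hv0 : 0 < v.val) (hvw : v.val < w.val)
    (hve : Even v.val) (hwe : Even w.val)
    (bu bv bw : ZMod 2) (hb : bu + bv + bw = 0)
    (z : Fin M → ZMod 2) (hz : cycleGamma M v w bu bv bw z ≠ 0) :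
    Complex.I ^ (bu.val + bv.val + bw.val) *
      (-1 : ℂ) ^ (Eexp M v w bu bv bw z).val = 1 :=
  ghz_type_identity_of_Gamma_ne_zero_general M hMeven v w hv0 hvw hve hwe bu bv bw hb z hz
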